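/- Let A and B be l×m real matrices with all entries positive. There is a bijection between the set of Nash equilibrium points (x*, y*) (pairs of probability vectors x* ∈ ℝ^l, y* ∈ ℝ^m satisfying the mutual best-response conditions for the bimatrix game (A,B)) and the set of pairs (u*, v*) of non-zero nonnegative vectors u* ∈ ℝ^l, v* ∈ ℝ^m satisfying uᵀB ≤ 1, Av ≤ 1, and the complementarity conditions: u*_i > 0 implies (Av*)_i = 1, and v*_j > 0 implies ((u*)ᵀB)_j = 1. -/

import Mathlib

open Matrix

def IsProbVec {n : ℕ} (x : Fin n → ℝ) : Prop := (∀ i, 0 ≤ x i) ∧ ∑ i, x i = 1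

def IsNashEq {l m : ℕ} (A B : Matrix (Fin l) (Fin m) ℝ) (x : Fin l → ℝ) (y : Fin m → ℝ) : Prop :=
  IsProbVec x ∧ IsProbVec y ∧
  (∀ x', IsProbVec x' → x' ⬝ᵥ (A *ᵥ y) ≤ x ⬝ᵥ (A *ᵥ y)) ∧
  (∀ y', IsProbVec y' → x ⬝ᵥ (B *ᵥ y') ≤ x ⬝ᵥ (B *ᵥ y))

/-!
A mixed strategy is a best response to a payoff vector `w` exactly when `w` attains its maximum,
the payoff itself, on the support of the strategy. So `(x, y)` is an equilibrium iff
`A y ≤ α` with equality on `supp x` and `xᵀ B ≤ β` with equality on `supp y`, where `α, β` are the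
two payoffs; positivity of `A` and `B` makes `α, β > 0`, and dividing `x` by `β` and `y` by `α`
turns these conditions into the complementarity problem. Conversely a solution `(u, v)` is
normalized to `(u / ∑ u, v / ∑ v)`, whose payoffs are `1 / ∑ v` and `1 / ∑ u`, and the two
rescalings are mutually inverse.
-/

open Finset

section BestResponse

variable {n : ℕ} {x w : Fin n → ℝ} {c : ℝ}

def IsMaxOnSupport (x w : Fin n → ℝ) (c : ℝ) : Prop :=
  (∀ i, w i ≤ c) ∧ ∀ i, 0 < x i → w i = c

lemma IsMaxOnSupport.smul (h : IsMaxOnSupport x w c) {a b : ℝ} (ha : 0 ≤ a) (hb : 0 ≤ b) :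
    IsMaxOnSupport (a • x) (b • w) (b * c) :=
  ⟨fun i => mul_le_mul_of_nonneg_left (h.1 i) hb,
    fun i hi => congrArg (b * ·) (h.2 i (pos_of_mul_pos_right hi ha))⟩

lemma isProbVec_single (i : Fin n) : IsProbVec (Pi.single i (1 : ℝ)) :=
  ⟨fun j => by by_cases h : j = i <;> simp [h], by simp⟩

lemma IsProbVec.ne_zero (hx : IsProbVec x) : x ≠ 0 := by
  rintro rfl
  simp [IsProbVec] at hx

lemma IsProbVec.sum_mul (hx : IsProbVec x) (c : ℝ) : ∑ i, x i * c = c := by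
  rw [← Finset.sum_mul, hx.2, one_mul]

lemma IsProbVec.sum_smul (hx : IsProbVec x) (c : ℝ) : ∑ i, (c • x) i = c := by
  simp only [Pi.smul_apply, smul_eq_mul, ← mul_sum, hx.2, mul_one]

noncomputable def normalizeSum (u : Fin n → ℝ) : Fin n → ℝ := (∑ i, u i)⁻¹ • u

lemma IsProbVec.normalizeSum_smul (hx : IsProbVec x) (hc : c ≠ 0) : normalizeSum (c • x) = x := by
  rw [normalizeSum, hx.sum_smul, inv_smul_smul₀ hc]

lemma sum_pos_of_nonneg_of_ne_zero (hw : ∀ i, 0 ≤ w i) (hne : w ≠ 0) : 0 < ∑ i, w i :=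
  Fintype.sum_pos (lt_of_le_of_ne hw (Ne.symm hne))

lemma isProbVec_normalizeSum (hw : ∀ i, 0 ≤ w i) (hne : w ≠ 0) : IsProbVec (normalizeSum w) := by
  have hs := sum_pos_of_nonneg_of_ne_zero hw hne
  refine ⟨fun i => mul_nonneg (inv_nonneg.2 hs.le) (hw i), ?_⟩
  simp only [normalizeSum, Pi.smul_apply, smul_eq_mul, ← mul_sum]
  exact inv_mul_cancel₀ hs.ne'

lemma IsProbVec.dotProduct_le (hx : IsProbVec x) (hw : ∀ i, w i ≤ c) : x ⬝ᵥ w ≤ c :=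
  calc x ⬝ᵥ w ≤ ∑ i, x i * c := sum_le_sum fun i _ => mul_le_mul_of_nonneg_left (hw i) (hx.1 i)
    _ = c := hx.sum_mul c

lemma IsProbVec.dotProduct_pos (hx : IsProbVec x) (hw : ∀ i, 0 < w i) : 0 < x ⬝ᵥ w := by
  obtain ⟨i, -, hi⟩ := (sum_pos_iff_of_nonneg fun i _ => hx.1 i).1 (hx.2 ▸ one_pos)
  exact sum_pos' (fun j _ => mul_nonneg (hx.1 j) (hw j).le) ⟨i, mem_univ i, mul_pos hi (hw i)⟩

lemma IsMaxOnSupport.dotProduct_eq (h : IsMaxOnSupport x w c) (hx : IsProbVec x) :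
    x ⬝ᵥ w = c :=
  calc x ⬝ᵥ w = ∑ i, x i * c := sum_congr rfl fun i _ => by
        rcases (hx.1 i).lt_or_eq with hi | hi
        · rw [h.2 i hi]
        · rw [← hi, zero_mul, zero_mul]
    _ = c := hx.sum_mul c

lemma isMaxOnSupport_iff_isBestResponse (hx : IsProbVec x) :
    IsMaxOnSupport x w (x ⬝ᵥ w) ↔ ∀ x', IsProbVec x' → x' ⬝ᵥ w ≤ x ⬝ᵥ w := by
  refine ⟨fun h x' hx' => hx'.dotProduct_le h.1, fun hopt => ?_⟩
  have hle : ∀ i, w i ≤ x ⬝ᵥ w := fun i => by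
    simpa [single_dotProduct] using hopt _ (isProbVec_single i)
  refine ⟨hle, fun i hi => (hle i).antisymm (not_lt.1 fun hlt => ?_)⟩
  have : x ⬝ᵥ w < ∑ j, x j * (x ⬝ᵥ w) :=
    sum_lt_sum (fun j _ => mul_le_mul_of_nonneg_left (hle j) (hx.1 j))
      ⟨i, mem_univ i, mul_lt_mul_of_pos_left hlt hi⟩
  rw [hx.sum_mul] at this
  exact this.false

end BestResponse

section Bimatrix

variable {l m : ℕ} {A B : Matrix (Fin l) (Fin m) ℝ} {x : Fin l → ℝ} {y : Fin m → ℝ}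

lemma isNashEq_iff : IsNashEq A B x y ↔ IsProbVec x ∧ IsProbVec y ∧
    IsMaxOnSupport x (A *ᵥ y) (x ⬝ᵥ (A *ᵥ y)) ∧ IsMaxOnSupport y (x ᵥ* B) (x ⬝ᵥ (B *ᵥ y)) := by
  have hB : ∀ y', x ⬝ᵥ (B *ᵥ y') = y' ⬝ᵥ (x ᵥ* B) := fun y' => by
    rw [dotProduct_mulVec, dotProduct_comm]
  simp only [IsNashEq, hB]
  exact ⟨fun ⟨hx, hy, hxA, hyB⟩ => ⟨hx, hy, (isMaxOnSupport_iff_isBestResponse hx).2 hxA,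
      (isMaxOnSupport_iff_isBestResponse hy).2 hyB⟩,
    fun ⟨hx, hy, hxA, hyB⟩ => ⟨hx, hy, (isMaxOnSupport_iff_isBestResponse hx).1 hxA,
      (isMaxOnSupport_iff_isBestResponse hy).1 hyB⟩⟩

lemma payoff_pos (hA : ∀ i j, 0 < A i j) (hx : IsProbVec x) (hy : IsProbVec y) :
    0 < x ⬝ᵥ (A *ᵥ y) :=
  hx.dotProduct_pos fun i => by
    rw [mulVec, dotProduct_comm]
    exact hy.dotProduct_pos (hA i)

def IsLCPSol (A B : Matrix (Fin l) (Fin m) ℝ) (u : Fin l → ℝ) (v : Fin m → ℝ) : Prop :=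
  u ≠ 0 ∧ v ≠ 0 ∧ (∀ i, 0 ≤ u i) ∧ (∀ j, 0 ≤ v j) ∧
    IsMaxOnSupport u (A *ᵥ v) 1 ∧ IsMaxOnSupport v (u ᵥ* B) 1

lemma IsNashEq.isLCPSol (hA : ∀ i j, 0 < A i j) (hB : ∀ i j, 0 < B i j)
    (h : IsNashEq A B x y) :
    IsLCPSol A B ((x ⬝ᵥ (B *ᵥ y))⁻¹ • x) ((x ⬝ᵥ (A *ᵥ y))⁻¹ • y) := by
  obtain ⟨hx, hy, hxA, hyB⟩ := isNashEq_iff.1 h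
  have hα := payoff_pos hA hx hy
  have hβ := payoff_pos hB hx hy
  refine ⟨smul_ne_zero (inv_ne_zero hβ.ne') hx.ne_zero,
    smul_ne_zero (inv_ne_zero hα.ne') hy.ne_zero,
    fun i => mul_nonneg (inv_nonneg.2 hβ.le) (hx.1 i),
    fun j => mul_nonneg (inv_nonneg.2 hα.le) (hy.1 j), ?_, ?_⟩
  · rw [mulVec_smul, ← inv_mul_cancel₀ hα.ne']
    exact hxA.smul (inv_nonneg.2 hβ.le) (inv_nonneg.2 hα.le)
  · rw [smul_vecMul, ← inv_mul_cancel₀ hβ.ne']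
    exact hyB.smul (inv_nonneg.2 hα.le) (inv_nonneg.2 hβ.le)

lemma IsLCPSol.isMaxOnSupport_normalizeSum {u : Fin l → ℝ} {v : Fin m → ℝ}
    (h : IsLCPSol A B u v) :
    IsMaxOnSupport (normalizeSum u) (A *ᵥ normalizeSum v) (∑ j, v j)⁻¹ ∧
      IsMaxOnSupport (normalizeSum v) (normalizeSum u ᵥ* B) (∑ i, u i)⁻¹ := by
  obtain ⟨-, -, hu, hv, huA, hvB⟩ := h
  have hs : 0 ≤ (∑ i, u i)⁻¹ := inv_nonneg.2 (sum_nonneg fun i _ => hu i)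
  have ht : 0 ≤ (∑ j, v j)⁻¹ := inv_nonneg.2 (sum_nonneg fun j _ => hv j)
  constructor
  · simpa only [normalizeSum, mulVec_smul, mul_one] using huA.smul hs ht
  · simpa only [normalizeSum, smul_vecMul, mul_one] using hvB.smul ht hs

lemma IsLCPSol.isProbVec_normalizeSum {u : Fin l → ℝ} {v : Fin m → ℝ}
    (h : IsLCPSol A B u v) : IsProbVec (normalizeSum u) ∧ IsProbVec (normalizeSum v) :=
  ⟨_root_.isProbVec_normalizeSum h.2.2.1 h.1, _root_.isProbVec_normalizeSum h.2.2.2.1 h.2.1⟩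

lemma IsLCPSol.payoffs_normalizeSum {u : Fin l → ℝ} {v : Fin m → ℝ} (h : IsLCPSol A B u v) :
    normalizeSum u ⬝ᵥ (A *ᵥ normalizeSum v) = (∑ j, v j)⁻¹ ∧
      normalizeSum u ⬝ᵥ (B *ᵥ normalizeSum v) = (∑ i, u i)⁻¹ := by
  obtain ⟨hxA, hyB⟩ := h.isMaxOnSupport_normalizeSum
  obtain ⟨hx, hy⟩ := h.isProbVec_normalizeSum
  refine ⟨hxA.dotProduct_eq hx, ?_⟩
  rw [dotProduct_mulVec, dotProduct_comm]
  exact hyB.dotProduct_eq hy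

lemma IsLCPSol.isNashEq_normalizeSum {u : Fin l → ℝ} {v : Fin m → ℝ} (h : IsLCPSol A B u v) :
    IsNashEq A B (normalizeSum u) (normalizeSum v) := by
  obtain ⟨hxA, hyB⟩ := h.isMaxOnSupport_normalizeSum
  obtain ⟨hx, hy⟩ := h.isProbVec_normalizeSum
  obtain ⟨hA, hB⟩ := h.payoffs_normalizeSum
  exact isNashEq_iff.2 ⟨hx, hy, hA ▸ hxA, hB ▸ hyB⟩

noncomputable def nashEquivLCPSol (hA : ∀ i j, 0 < A i j) (hB : ∀ i j, 0 < B i j) :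
    {p : (Fin l → ℝ) × (Fin m → ℝ) // IsNashEq A B p.1 p.2} ≃
      {p : (Fin l → ℝ) × (Fin m → ℝ) // IsLCPSol A B p.1 p.2} where
  toFun p := ⟨((p.1.1 ⬝ᵥ (B *ᵥ p.1.2))⁻¹ • p.1.1, (p.1.1 ⬝ᵥ (A *ᵥ p.1.2))⁻¹ • p.1.2),
    p.2.isLCPSol hA hB⟩
  invFun p := ⟨(normalizeSum p.1.1, normalizeSum p.1.2), p.2.isNashEq_normalizeSum⟩
  left_inv := by
    rintro ⟨⟨x, y⟩, hx, hy, -⟩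
    ext1
    exact Prod.ext (hx.normalizeSum_smul (inv_ne_zero (payoff_pos hB hx hy).ne'))
      (hy.normalizeSum_smul (inv_ne_zero (payoff_pos hA hx hy).ne'))
  right_inv := by
    rintro ⟨⟨u, v⟩, h⟩
    obtain ⟨hxA, hxB⟩ := h.payoffs_normalizeSum
    obtain ⟨hu0, hv0, hu, hv, -⟩ := h
    ext1
    dsimp only
    rw [hxA, hxB, inv_inv, inv_inv, normalizeSum, normalizeSum,
      smul_inv_smul₀ (sum_pos_of_nonneg_of_ne_zero hu hu0).ne',
      smul_inv_smul₀ (sum_pos_of_nonneg_of_ne_zero hv hv0).ne']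

end Bimatrix

theorem bimatrix_nash_lcp_bijection {l m : ℕ} (A B : Matrix (Fin l) (Fin m) ℝ)
    (hA : ∀ i j, 0 < A i j) (hB : ∀ i j, 0 < B i j) :
    Nonempty ({p : (Fin l → ℝ) × (Fin m → ℝ) // IsNashEq A B p.1 p.2} ≃
      {p : (Fin l → ℝ) × (Fin m → ℝ) //
        p.1 ≠ 0 ∧ p.2 ≠ 0 ∧ (∀ i, 0 ≤ p.1 i) ∧ (∀ j, 0 ≤ p.2 j) ∧
        (∀ j, (p.1 ᵥ* B) j ≤ 1) ∧ (∀ i, (A *ᵥ p.2) i ≤ 1) ∧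
        (∀ i, 0 < p.1 i → (A *ᵥ p.2) i = 1) ∧
        (∀ j, 0 < p.2 j → (p.1 ᵥ* B) j = 1)}) := by
  refine ⟨(nashEquivLCPSol hA hB).trans (Equiv.subtypeEquivRight fun p => ?_)⟩
  simp only [IsLCPSol, IsMaxOnSupport]
  tauto
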